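/- For the free permutation rack (ℤ × S, +1) on a set S, the multiplication map ⟨S̄⟩^{⊗(n−1)} ⊗ ℤS → HR_n(ℤ × S, +1), sending v₁ ⊗ ⋯ ⊗ v_{n−1} ⊗ s to the homology class of the cycle v₁⋯v_{n−1}·s, is an isomorphism of abelian groups for all n ≥ 1. -/

import Mathlib

/-- Rack chains: free abelian group on `n`-tuples. -/
abbrev CR (X : Type) (n : ℕ) : Type := (Fin n → X) →₀ ℤ

/-- The monomial basis element. -/
noncomputable def mon {X : Type} {n : ℕ} (w : Fin n → X) : CR X n := Finsupp.single w 1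

/-- Delete the `(i+1)`-st entry (1-indexed `k = i+1`). -/
def del {X : Type} {n : ℕ} (w : Fin (n+1) → X) (i : Fin n) : Fin n → X :=
  fun j => if (j : ℕ) < (i : ℕ) then w j.castSucc else w j.succ

/-- Delete the `(i+1)`-st entry and act with it on all later entries. -/
def act {X : Type} (op : X → X → X) {n : ℕ} (w : Fin (n+1) → X) (i : Fin n) : Fin n → X :=
  fun j => if (j : ℕ) < (i : ℕ) then w j.castSucc else op (w i.castSucc) (w j.succ)

/-- Rack differential on a monomial. -/
noncomputable def dMon {X : Type} (op : X → X → X) {n : ℕ} (w : Fin (n+1) → X) : CR X n :=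
  ∑ i : Fin n, ((-1 : ℤ) ^ (i : ℕ)) • (mon (del w i) - mon (act op w i))

/-- The rack differential `CR_{n+1} → CR_n`. -/
noncomputable def d {X : Type} (op : X → X → X) (n : ℕ) : CR X (n+1) →+ CR X n :=
  Finsupp.liftAddHom fun w => zmultiplesHom _ (dMon op w)

/-- Left concatenation `w ↦ x·w`. -/
noncomputable def consHom {X : Type} (x : X) (n : ℕ) : CR X n →+ CR X (n+1) :=
  Finsupp.liftAddHom fun w => zmultiplesHom _ (mon (Fin.cons x w))

/-- Diagonal action of a map `φ` on chains. -/
noncomputable def mapChains {X : Type} (φ : X → X) (n : ℕ) : CR X n →+ CR X n :=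
  Finsupp.liftAddHom fun w => zmultiplesHom _ (mon (φ ∘ w))

/-- Cycles. -/
noncomputable def ZC {X : Type} (op : X → X → X) : (n : ℕ) → AddSubgroup (CR X n)
  | 0 => ⊤
  | (m+1) => (d op m).ker

/-- Boundaries. -/
noncomputable def BC {X : Type} (op : X → X → X) (n : ℕ) : AddSubgroup (CR X n) :=
  (d op n).range

/-- Rack homology. -/
abbrev HR (X : Type) (op : X → X → X) (n : ℕ) : Type :=
  ZC op n ⧸ ((BC op n).addSubgroupOf (ZC op n))

/-- The rack operation of a permutation rack. -/
def permOp {X : Type} (φ : X ≃ X) : X → X → X := fun _ y => φ y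

/-- Multiplication by an element of `ℤX`. -/
noncomputable def mulChain {X : Type} (v : X →₀ ℤ) (n : ℕ) : CR X n →+ CR X (n+1) :=
  ∑ x ∈ v.support, v x • consHom x n

open TensorProduct

/-- The rack operation of the free permutation rack `ℤ × S`. -/
def shiftOp (S : Type) : ℤ × S → ℤ × S → ℤ × S := fun _ p => (p.1 + 1, p.2)

/-- The augmentation `ℤS → ℤ`. -/
noncomputable def aug (S : Type) : (S →₀ ℤ) →ₗ[ℤ] ℤ :=
  Finsupp.linearCombination ℤ (fun _ : S => (1 : ℤ))

/-- Augmentation-zero elements `S̄ ⊆ ℤS`. -/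
noncomputable def Saug (S : Type) : Submodule ℤ (S →₀ ℤ) := LinearMap.ker (aug S)

/-- An element of `ℤS` viewed as a degree-one chain on `ℤ × S`, via `s ↦ (0, s)`. -/
noncomputable def emb1 {S : Type} (c : S →₀ ℤ) : CR (ℤ × S) 1 :=
  c.mapDomain fun s => (fun _ : Fin 1 => ((0 : ℤ), s))

/-- The product chain `v₁⋯v_n·c` in `CR_{n+1}(ℤ × S)`, all factors via `s ↦ (0, s)`. -/
noncomputable def prodChain {S : Type} : (n : ℕ) → (Fin n → (S →₀ ℤ)) → (S →₀ ℤ) →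
    CR (ℤ × S) (n+1)
  | 0, _, c => emb1 c
  | (m+1), v, c =>
      mulChain ((v 0).mapDomain fun s => ((0 : ℤ), s)) (m+1)
        (prodChain m (fun i => v i.succ) c)

/-!
Write `x·w` for the word with first letter `x`. In a permutation rack the differential
satisfies `d(x·c) = c - Tc - x·dc`, where `T` applies the permutation to every letter; for
`ℤ × S` it raises the level of every letter by one, so a homomorphism out of the chains is
determined by its values on words starting at level `0` together with its behaviour under `T`.
Fix `s₀ ∈ S` and put `q(s) = s - s₀ ∈ S̄`. The map `Θ` sending a word to the tensor of `q` of its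
letters (the last one kept as it is) only sees `S`-coordinates, so it kills boundaries, and it is
a left inverse of the multiplication map `p`. A homotopy `H`, defined by recursion on the length
of words, satisfies `dH + Hd = 1 - pΘ`, so `p` and `Θ` induce mutually inverse maps between
`S̄^{⊗n} ⊗ ℤS` and homology. For empty `S` both sides vanish.
-/

section Chains

variable {X : Type}

@[simp] lemma d_mon (op : X → X → X) (n : ℕ) (w : Fin (n+1) → X) :
    d op n (mon w) = dMon op w := by
  simp [d, mon]

@[simp] lemma consHom_mon (x : X) {n : ℕ} (w : Fin n → X) :
    consHom x n (mon w) = mon (Fin.cons x w) := by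
  simp [consHom, mon]

@[simp] lemma mapChains_mon (φ : X → X) {n : ℕ} (w : Fin n → X) :
    mapChains φ n (mon w) = mon (φ ∘ w) := by
  simp [mapChains, mon]

lemma CR.addHom_ext {n : ℕ} {M : Type} [AddCommGroup M] {f g : CR X n →+ M}
    (h : ∀ w, f (mon w) = g (mon w)) : f = g :=
  Finsupp.addHom_ext' fun w => AddMonoidHom.ext_int (h w)

lemma d_zero (op : X → X → X) : d op 0 = 0 := by
  refine CR.addHom_ext fun w => ?_
  simp [dMon]

lemma del_cons (x : X) {n : ℕ} (w : Fin (n+1) → X) (i : Fin n) :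
    del (Fin.cons x w) i.succ = Fin.cons x (del w i) := by
  ext j
  refine Fin.cases ?_ (fun j => ?_) j
  · simp [del]
  · by_cases h : (j : ℕ) < i <;> simp [del, h]

lemma act_cons (op : X → X → X) (x : X) {n : ℕ} (w : Fin (n+1) → X) (i : Fin n) :
    act op (Fin.cons x w) i.succ = Fin.cons x (act op w i) := by
  ext j
  refine Fin.cases ?_ (fun j => ?_) j
  · simp [act]
  · by_cases h : (j : ℕ) < i <;> simp [act, h]

noncomputable def mulₗ (n : ℕ) : (X →₀ ℤ) →ₗ[ℤ] CR X n →ₗ[ℤ] CR X (n+1) :=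
  Finsupp.linearCombination ℤ fun x => (consHom x n).toIntLinearMap

lemma mulChain_apply_eq_mulₗ (v : X →₀ ℤ) (n : ℕ) (c : CR X n) :
    mulChain v n c = mulₗ n v c := by
  simp [mulChain, mulₗ, Finsupp.linearCombination_apply, Finsupp.sum]

@[simp] lemma mulₗ_single (x : X) (k : ℤ) {n : ℕ} (c : CR X n) :
    mulₗ n (Finsupp.single x k) c = k • consHom x n c := by
  simp [mulₗ]

lemma exists_addEquiv_HR_of_retraction {op : X → X → X} {n : ℕ} {G : Type}
    [AddCommGroup G] (p : G →+ CR X (n+1)) (θ : CR X (n+1) →+ G)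
    (hp : ∀ g, p g ∈ ZC op (n+1))
    (hθ : ∀ c, θ (d op (n+1) c) = 0) (hθp : ∀ g, θ (p g) = g)
    (hpθ : ∀ z ∈ ZC op (n+1), z - p (θ z) ∈ BC op (n+1)) :
    ∃ e : G ≃+ HR X op (n+1), ∀ g, e g = QuotientAddGroup.mk ⟨p g, hp g⟩ := by
  let P : G →+ HR X op (n+1) := (QuotientAddGroup.mk' _).comp (p.codRestrict _ hp)
  let Θ : HR X op (n+1) →+ G :=
    QuotientAddGroup.lift _ (θ.comp (ZC op (n+1)).subtype) fun z hz => by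
      obtain ⟨c, hc⟩ := AddSubgroup.mem_addSubgroupOf.mp hz
      simp [← hc, hθ]
  refine ⟨{ P with invFun := Θ, left_inv := hθp, right_inv := fun h => ?_ }, fun g => rfl⟩
  induction h using QuotientAddGroup.induction_on with
  | H z =>
    show QuotientAddGroup.mk ⟨p (θ z), hp _⟩ = QuotientAddGroup.mk z
    rw [QuotientAddGroup.eq, AddSubgroup.mem_addSubgroupOf]
    simpa [neg_add_eq_sub] using hpθ z z.2

end Chains

section PermutationRack

variable {X : Type} {op : X → X → X} {φ : X → X}

lemma dMon_cons (hop : ∀ x y, op x y = φ y) (x : X) {n : ℕ} (w : Fin (n+1) → X) :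
    dMon op (Fin.cons x w) = mon w - mon (φ ∘ w) - consHom x n (dMon op w) := by
  have hdel : del (Fin.cons x w) 0 = w := by ext j; simp [del]
  have hact : act op (Fin.cons x w) 0 = φ ∘ w := by ext j; simp [act, hop]
  simp only [dMon, Fin.sum_univ_succ, hdel, hact, del_cons, act_cons, map_sum, map_zsmul,
    map_sub, consHom_mon, Fin.val_zero, Fin.val_succ, pow_zero, one_smul, pow_succ, mul_neg_one,
    neg_smul, Finset.sum_neg_distrib]
  abel

lemma d_consHom (hop : ∀ x y, op x y = φ y) (x : X) {n : ℕ} (c : CR X (n+1)) :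
    d op (n+1) (consHom x (n+1) c) = c - mapChains φ (n+1) c - consHom x n (d op n c) := by
  have : (d op (n+1)).comp (consHom x (n+1)) =
      .id _ - mapChains φ (n+1) - (consHom x n).comp (d op n) :=
    CR.addHom_ext fun w => by simp [dMon_cons hop]
  exact DFunLike.congr_fun this c

lemma d_mapChains (hop : ∀ x y, op x y = φ y) {n : ℕ} (c : CR X (n+1)) :
    d op n (mapChains φ (n+1) c) = mapChains φ n (d op n c) := by
  have hdel (w : Fin (n+1) → X) (i : Fin n) : del (φ ∘ w) i = φ ∘ del w i := by
    ext j; by_cases h : (j : ℕ) < i <;> simp [del, h]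
  have hact (w : Fin (n+1) → X) (i : Fin n) : act op (φ ∘ w) i = φ ∘ act op w i := by
    ext j; by_cases h : (j : ℕ) < i <;> simp [act, h, hop]
  have : (d op n).comp (mapChains φ (n+1)) = (mapChains φ n).comp (d op n) :=
    CR.addHom_ext fun w => by simp [dMon, hdel, hact]
  exact DFunLike.congr_fun this c

lemma d_mulₗ (hop : ∀ x y, op x y = φ y) (v : X →₀ ℤ) {n : ℕ} (c : CR X (n+1)) :
    d op (n+1) (mulₗ (n+1) v c) =
      aug X v • (c - mapChains φ (n+1) c) - mulₗ n v (d op n c) := by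
  induction v using Finsupp.induction_linear with
  | zero => simp
  | add v v' hv hv' => simp only [map_add, LinearMap.add_apply, hv, hv', add_smul]; abel
  | single x k => simp [aug, d_consHom hop, smul_sub]

end PermutationRack

/-- `∑_{0 ≤ j < k} f j`, continued to `k < 0` as `-∑_{k ≤ j < 0} f j`. -/
noncomputable def intPartialSum {M : Type} [AddCommGroup M] (f : ℤ → M) (k : ℤ) : M :=
  ∑ j ∈ Finset.Ico 0 k, f j - ∑ j ∈ Finset.Ico k 0, f j

@[simp] lemma intPartialSum_zero {M : Type} [AddCommGroup M] (f : ℤ → M) :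
    intPartialSum f 0 = 0 := by
  simp [intPartialSum]

lemma intPartialSum_add_one {M : Type} [AddCommGroup M] (f : ℤ → M) (k : ℤ) :
    intPartialSum f (k+1) = intPartialSum f k + f k := by
  rcases le_or_gt 0 k with hk | hk
  · rw [intPartialSum, intPartialSum, ← Finset.insert_Ico_right_eq_Ico_add_one hk,
      Finset.sum_insert Finset.right_notMem_Ico,
      Finset.Ico_eq_empty_of_le (by omega : (0 : ℤ) ≤ k + 1),
      Finset.Ico_eq_empty_of_le hk]
    abel
  · rw [intPartialSum, intPartialSum, ← Finset.insert_Ico_add_one_left_eq_Ico hk,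
      Finset.sum_insert (by simp), Finset.Ico_eq_empty_of_le (by omega : k + 1 ≤ 0),
      Finset.Ico_eq_empty_of_le hk.le]
    abel

namespace FreePermutationRack

variable {S : Type}

def shift (j : ℤ) (x : ℤ × S) : ℤ × S := (x.1 + j, x.2)

@[simp] lemma shift_fst (j : ℤ) (x : ℤ × S) : (shift j x).1 = x.1 + j := rfl

@[simp] lemma shift_snd (j : ℤ) (x : ℤ × S) : (shift j x).2 = x.2 := rfl

lemma shift_comp_shift (j k : ℤ) :
    shift j ∘ shift k = (shift (k + j) : ℤ × S → ℤ × S) := by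
  ext x <;> simp [add_assoc]

@[simp] lemma shift_zero : (shift 0 : ℤ × S → ℤ × S) = id := by
  ext x <;> simp

lemma shiftOp_eq (x y : ℤ × S) : shiftOp S x y = shift 1 y := rfl

local notation "T" => mapChains (shift 1)

/-- Every word is a shift of one whose first letter lies at level `0`. -/
lemma CR.addHom_ext_of_shift {m : ℕ} {M : Type} [AddCommGroup M]
    {f g : CR (ℤ × S) (m+1) →+ M}
    (hT : ∀ c, f (T (m+1) c) - g (T (m+1) c) = f c - g c)
    (h0 : ∀ u : Fin (m+1) → ℤ × S, (u 0).1 = 0 → f (mon u) = g (mon u)) : f = g := by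
  have hstep (k : ℤ) (u : Fin (m+1) → ℤ × S) :
      (f - g) (mon (shift (k+1) ∘ u)) = (f - g) (mon (shift k ∘ u)) := by
    simpa [← Function.comp_assoc, shift_comp_shift, add_comm] using hT (mon (shift k ∘ u))
  have hshift (u : Fin (m+1) → ℤ × S) (k : ℤ) :
      (f - g) (mon (shift k ∘ u)) = (f - g) (mon u) := by
    induction k using Int.induction_on with
    | zero => simp
    | succ k ih => rw [hstep, ih]
    | pred k ih => rw [← ih, ← hstep, sub_add_cancel]
  refine CR.addHom_ext fun u => sub_eq_zero.mp ?_
  have hu : shift (u 0).1 ∘ (shift (-(u 0).1) ∘ u) = u := by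
    rw [← Function.comp_assoc, shift_comp_shift]; simp
  rw [← AddMonoidHom.sub_apply, ← hu, hshift, AddMonoidHom.sub_apply, sub_eq_zero]
  exact h0 _ (by simp)

noncomputable def embedZero : (S →₀ ℤ) →ₗ[ℤ] (ℤ × S →₀ ℤ) :=
  Finsupp.lmapDomain ℤ ℤ fun s => ((0 : ℤ), s)

lemma aug_embedZero (v : S →₀ ℤ) : aug (ℤ × S) (embedZero v) = aug S v := by
  simp [aug, embedZero, Finsupp.linearCombination_mapDomain, Function.comp_def]

abbrev AugTensor (S : Type) (n : ℕ) : Type :=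
  PiTensorProduct ℤ (fun _ : Fin n => Saug S) ⊗[ℤ] (S →₀ ℤ)

lemma AugTensor.induction_on {n : ℕ} {P : AugTensor S n → Prop} (g : AugTensor S n)
    (zero : P 0) (add : ∀ g g', P g → P g' → P (g + g'))
    (tprod_tmul : ∀ (v : Fin n → Saug S) (y : S →₀ ℤ),
      P (PiTensorProduct.tprod ℤ v ⊗ₜ y)) :
    P g := by
  induction g using TensorProduct.induction_on with
  | zero => exact zero
  | add g g' hg hg' => exact add g g' hg hg'
  | tmul t y =>
    induction t using PiTensorProduct.induction_on with
    | smul_tprod k v => rw [TensorProduct.smul_tmul]; exact tprod_tmul v (k • y)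
    | add t t' ht ht' => rw [TensorProduct.add_tmul]; exact add _ _ ht ht'

noncomputable def tensorCons (n : ℕ) : Saug S →+ AugTensor S n →+ AugTensor S (n+1) :=
  LinearMap.toAddMonoidHom'.comp
    (LinearMap.rTensorHom (S →₀ ℤ) ∘ₗ PiTensorProduct.lift.toLinearMap ∘ₗ
      (PiTensorProduct.tprod ℤ :
        MultilinearMap ℤ (fun _ : Fin (n+1) => Saug S) _).curryLeft).toAddMonoidHom

@[simp] lemma tensorCons_tprod_tmul {n : ℕ} (a : Saug S) (v : Fin n → Saug S)
    (y : S →₀ ℤ) :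
    tensorCons n a (PiTensorProduct.tprod ℤ v ⊗ₜ y) =
      PiTensorProduct.tprod ℤ (Fin.cons a v) ⊗ₜ y := by
  simp [tensorCons]

noncomputable def mulMultilinear :
    (n : ℕ) →
      MultilinearMap ℤ (fun _ : Fin n => Saug S) ((S →₀ ℤ) →ₗ[ℤ] CR (ℤ × S) (n+1))
  | 0 => MultilinearMap.constOfIsEmpty ℤ _
      (Finsupp.lmapDomain ℤ ℤ fun s (_ : Fin 1) => ((0 : ℤ), s))
  | n+1 => LinearMap.uncurryLeft
      { toFun a := (LinearMap.llcomp ℤ (S →₀ ℤ) _ _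
          (mulₗ (n+1) (embedZero (a : S →₀ ℤ)))).compMultilinearMap (mulMultilinear n)
        map_add' a b := by ext; simp
        map_smul' k a := by ext; simp }

noncomputable def mulMap (n : ℕ) : AugTensor S n →+ CR (ℤ × S) (n+1) :=
  (TensorProduct.lift (PiTensorProduct.lift (mulMultilinear n))).toAddMonoidHom

@[simp] lemma mulMap_tprod_tmul {n : ℕ} (v : Fin n → Saug S) (y : S →₀ ℤ) :
    mulMap n (PiTensorProduct.tprod ℤ v ⊗ₜ y) = mulMultilinear n v y := by
  simp [mulMap]

lemma mulMultilinear_succ_apply {n : ℕ} (v : Fin (n+1) → Saug S) (y : S →₀ ℤ) :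
    mulMultilinear (n+1) v y =
      mulₗ (n+1) (embedZero (v 0 : S →₀ ℤ)) (mulMultilinear n (Fin.tail v) y) := by
  simp [mulMultilinear]

lemma mulMultilinear_eq_prodChain (n : ℕ) (v : Fin n → Saug S) (y : S →₀ ℤ) :
    mulMultilinear n v y = prodChain n (fun i => (v i : S →₀ ℤ)) y := by
  induction n with
  | zero => simp [mulMultilinear, prodChain, emb1]
  | succ n ih =>
    simp [mulMultilinear_succ_apply, prodChain, ih, mulChain_apply_eq_mulₗ, embedZero, Fin.tail]

lemma mulMap_tensorCons {n : ℕ} (a : Saug S) (g : AugTensor S n) :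
    mulMap (n+1) (tensorCons n a g) = mulₗ (n+1) (embedZero (a : S →₀ ℤ)) (mulMap n g) := by
  induction g using AugTensor.induction_on with
  | zero => simp
  | add g g' hg hg' => simp [hg, hg']
  | tprod_tmul v y => simp [mulMultilinear_succ_apply]

lemma d_mulMultilinear {n : ℕ} (v : Fin n → Saug S) (y : S →₀ ℤ) :
    d (shiftOp S) n (mulMultilinear n v y) = 0 := by
  induction n with
  | zero => simp [d_zero]
  | succ n ih =>
    have hv : aug S (v 0 : S →₀ ℤ) = 0 := (v 0).2
    simp [mulMultilinear_succ_apply, d_mulₗ shiftOp_eq, aug_embedZero, hv, ih]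

lemma d_mulMap {n : ℕ} (g : AugTensor S n) : d (shiftOp S) n (mulMap n g) = 0 := by
  induction g using AugTensor.induction_on with
  | zero => simp
  | add g g' hg hg' => simp [hg, hg']
  | tprod_tmul v y => simp [d_mulMultilinear]

variable (s0 : S)

noncomputable def q (s : S) : Saug S :=
  ⟨Finsupp.single s 1 - Finsupp.single s0 1, by simp [Saug, aug]⟩

lemma mulₗ_embedZero_q {n : ℕ} (s : S) (c : CR (ℤ × S) n) :
    mulₗ n (embedZero (q s0 s : S →₀ ℤ)) c =
      consHom ((0 : ℤ), s) n c - consHom ((0 : ℤ), s0) n c := by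
  simp [q, embedZero, Finsupp.mapDomain_sub]

lemma aug_embedZero_q (s : S) : aug (ℤ × S) (embedZero (q s0 s : S →₀ ℤ)) = 0 := by
  rw [aug_embedZero]; exact (q s0 s).2

/-- A contracting homotopy onto the image of the multiplication map; on a word `x·w` it is
forced by `homotopy_shift` and `homotopy_consHom` after shifting `x` to level `0`. -/
noncomputable def homotopy : (m : ℕ) → CR (ℤ × S) m →+ CR (ℤ × S) (m+1)
  | 0 => 0
  | m+1 => Finsupp.liftAddHom fun u => zmultiplesHom _ <|
      -mulₗ (m+1) (embedZero (q s0 (u 0).2 : S →₀ ℤ))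
          (homotopy m (mon (shift (-(u 0).1) ∘ Fin.tail u)))
        - intPartialSum (fun j => mon (Fin.cons ((0 : ℤ), s0)
            (shift j ∘ Fin.cons ((0 : ℤ), (u 0).2) (shift (-(u 0).1) ∘ Fin.tail u)))) (u 0).1

@[simp] lemma homotopy_zero : homotopy s0 0 = 0 := rfl

lemma homotopy_succ_mon {m : ℕ} (u : Fin (m+1) → ℤ × S) :
    homotopy s0 (m+1) (mon u) =
      -mulₗ (m+1) (embedZero (q s0 (u 0).2 : S →₀ ℤ))
          (homotopy s0 m (mon (shift (-(u 0).1) ∘ Fin.tail u)))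
        - intPartialSum (fun j => mon (Fin.cons ((0 : ℤ), s0)
            (shift j ∘ Fin.cons ((0 : ℤ), (u 0).2) (shift (-(u 0).1) ∘ Fin.tail u))))
          (u 0).1 := by
  simp [homotopy, mon]

lemma homotopy_shift {m : ℕ} (c : CR (ℤ × S) (m+1)) :
    homotopy s0 (m+1) (T (m+1) c) = homotopy s0 (m+1) c - consHom ((0 : ℤ), s0) (m+1) c := by
  have : (homotopy s0 (m+1)).comp (T (m+1)) =
      homotopy s0 (m+1) - consHom ((0 : ℤ), s0) (m+1) := by
    refine CR.addHom_ext fun u => ?_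
    have htail :
        shift (-((u 0).1 + 1)) ∘ Fin.tail (shift 1 ∘ u) = shift (-(u 0).1) ∘ Fin.tail u := by
      ext i <;> simp [Fin.tail]
    have hu :
        shift (u 0).1 ∘ Fin.cons ((0 : ℤ), (u 0).2) (shift (-(u 0).1) ∘ Fin.tail u) = u := by
      ext i <;> refine Fin.cases ?_ (fun i => ?_) i <;> simp [Fin.tail]
    simp only [AddMonoidHom.comp_apply, mapChains_mon, homotopy_succ_mon, Function.comp_apply,
      shift_fst, shift_snd, htail, intPartialSum_add_one, hu, AddMonoidHom.sub_apply, consHom_mon]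
    abel
  exact DFunLike.congr_fun this c

lemma homotopy_consHom {m : ℕ} (x : ℤ × S) (hx : x.1 = 0) (c : CR (ℤ × S) m) :
    homotopy s0 (m+1) (consHom x m c) =
      -mulₗ (m+1) (embedZero (q s0 x.2 : S →₀ ℤ)) (homotopy s0 m c) := by
  have : (homotopy s0 (m+1)).comp (consHom x m) =
      -(mulₗ (m+1) (embedZero (q s0 x.2 : S →₀ ℤ))).toAddMonoidHom.comp (homotopy s0 m) :=
    CR.addHom_ext fun w => by simp [homotopy_succ_mon, hx]
  exact DFunLike.congr_fun this c

/-- `x₁⋯xₙ·y ↦ q(x₁) ⊗ ⋯ ⊗ q(xₙ) ⊗ y` with `q(a, s) = s - s₀`; it only sees the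
`S`-coordinates, which the rack differential does not change. -/
noncomputable def theta (n : ℕ) : CR (ℤ × S) (n+1) →+ AugTensor S n :=
  Finsupp.liftAddHom fun w => zmultiplesHom _ <|
    PiTensorProduct.tprod ℤ (fun i : Fin n => q s0 (w i.castSucc).2) ⊗ₜ
      Finsupp.single (w (Fin.last n)).2 1

@[simp] lemma theta_mon {n : ℕ} (w : Fin (n+1) → ℤ × S) :
    theta s0 n (mon w) = PiTensorProduct.tprod ℤ (fun i : Fin n => q s0 (w i.castSucc).2) ⊗ₜ
      Finsupp.single (w (Fin.last n)).2 1 := by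
  simp [theta, mon]

lemma theta_mon_congr {n : ℕ} {w w' : Fin (n+1) → ℤ × S}
    (h : Prod.snd ∘ w = Prod.snd ∘ w') :
    theta s0 n (mon w) = theta s0 n (mon w') := by
  have h' (i : Fin (n+1)) : (w i).2 = (w' i).2 := congrFun h i
  simp only [theta_mon, h']

lemma theta_d {n : ℕ} (c : CR (ℤ × S) (n+2)) : theta s0 n (d (shiftOp S) (n+1) c) = 0 := by
  have : (theta s0 n).comp (d (shiftOp S) (n+1)) = 0 := by
    refine CR.addHom_ext fun w => ?_
    simp only [AddMonoidHom.comp_apply, d_mon, dMon, map_sum, AddMonoidHom.zero_apply]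
    refine Finset.sum_eq_zero fun i _ => ?_
    have hsnd : Prod.snd ∘ del w i = Prod.snd ∘ act (shiftOp S) w i := by
      ext j; by_cases h : (j : ℕ) < i <;> simp [del, act, h, shiftOp]
    rw [map_zsmul, map_sub, theta_mon_congr s0 hsnd, sub_self, smul_zero]
  exact DFunLike.congr_fun this c

lemma theta_shift {n : ℕ} (c : CR (ℤ × S) (n+1)) : theta s0 n (T (n+1) c) = theta s0 n c := by
  have : (theta s0 n).comp (T (n+1)) = theta s0 n :=
    CR.addHom_ext fun w => by simp
  exact DFunLike.congr_fun this c

lemma theta_consHom {n : ℕ} (x : ℤ × S) (c : CR (ℤ × S) (n+1)) :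
    theta s0 (n+1) (consHom x (n+1) c) = tensorCons n (q s0 x.2) (theta s0 n c) := by
  have : (theta s0 (n+1)).comp (consHom x (n+1)) = (tensorCons n (q s0 x.2)).comp (theta s0 n) :=
    CR.addHom_ext fun w => by
      simp only [AddMonoidHom.comp_apply, consHom_mon, theta_mon, tensorCons_tprod_tmul]
      congr 2
      ext i
      refine Fin.cases ?_ (fun i => ?_) i <;> simp
  exact DFunLike.congr_fun this c

/-- `v ↦ v - ε(v) s₀`, a retraction of `ℤS` onto `S̄`. -/
noncomputable def retract : (S →₀ ℤ) →+ Saug S :=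
  Finsupp.liftAddHom fun s => zmultiplesHom _ (q s0 s)

lemma retract_coe (a : Saug S) : retract s0 (a : S →₀ ℤ) = a := by
  have key (v : S →₀ ℤ) :
      (retract s0 v : S →₀ ℤ) = v - aug S v • Finsupp.single s0 1 := by
    induction v using Finsupp.induction_linear with
    | zero => simp
    | add v v' hv hv' => simp only [map_add, Submodule.coe_add, hv, hv', add_smul]; abel
    | single s k => simp [retract, q, aug, smul_sub]
  have ha : aug S (a : S →₀ ℤ) = 0 := a.2
  ext1
  rw [key, ha, zero_smul, sub_zero]

lemma theta_mulₗ_embedZero {n : ℕ} (v : S →₀ ℤ) (c : CR (ℤ × S) (n+1)) :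
    theta s0 (n+1) (mulₗ (n+1) (embedZero v) c) = tensorCons n (retract s0 v) (theta s0 n c) := by
  induction v using Finsupp.induction_linear with
  | zero => simp
  | add v v' hv hv' => simp [hv, hv']
  | single s k => simp [embedZero, theta_consHom, retract]

lemma theta_mulMap {n : ℕ} (g : AugTensor S n) : theta s0 n (mulMap n g) = g := by
  induction n with
  | zero =>
    induction g using AugTensor.induction_on with
    | zero => simp
    | add g g' hg hg' => simp [hg, hg']
    | tprod_tmul v y =>
      induction y using Finsupp.induction_linear with
      | zero => simp
      | add y y' hy hy' => simp_all [TensorProduct.tmul_add]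
      | single s k =>
        simp [mulMultilinear, theta, Subsingleton.elim v (fun i => q s0 s)]
        rw [← TensorProduct.tmul_smul, Finsupp.smul_single_one]
  | succ n ih =>
    induction g using AugTensor.induction_on with
    | zero => simp
    | add g g' hg hg' => simp [hg, hg']
    | tprod_tmul v y =>
      rw [← Fin.cons_self_tail v, ← tensorCons_tprod_tmul, mulMap_tensorCons,
        theta_mulₗ_embedZero, ih, retract_coe]

lemma homotopy_d_shift {M : ℕ} (c : CR (ℤ × S) (M+1)) :
    homotopy s0 M (d (shiftOp S) M (T (M+1) c)) =
      homotopy s0 M (d (shiftOp S) M c) - consHom ((0 : ℤ), s0) M (d (shiftOp S) M c) := by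
  cases M with
  | zero => simp [d_zero]
  | succ m => rw [d_mapChains shiftOp_eq, homotopy_shift]

lemma mulMap_theta_mon_of_fst_eq_zero (u : Fin 1 → ℤ × S) (hu : (u 0).1 = 0) :
    mulMap 0 (theta s0 0 (mon u)) = mon u := by
  have : (fun _ : Fin 1 => ((0 : ℤ), (u 0).2)) = u := by
    ext i <;> simp [Subsingleton.elim i 0, hu]
  rw [theta_mon, mulMap_tprod_tmul]
  simp [mulMultilinear, mon, this]

lemma homotopy_identity_shift (M : ℕ) (c : CR (ℤ × S) (M+1)) :
    ((d (shiftOp S) (M+1)).comp (homotopy s0 (M+1)) + (homotopy s0 M).comp (d (shiftOp S) M)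
        + (mulMap M).comp (theta s0 M)) (T (M+1) c) - AddMonoidHom.id _ (T (M+1) c) =
      ((d (shiftOp S) (M+1)).comp (homotopy s0 (M+1)) + (homotopy s0 M).comp (d (shiftOp S) M)
        + (mulMap M).comp (theta s0 M)) c - AddMonoidHom.id _ c := by
  simp only [AddMonoidHom.add_apply, AddMonoidHom.comp_apply, AddMonoidHom.id_apply]
  rw [homotopy_shift, map_sub, d_consHom shiftOp_eq, homotopy_d_shift, theta_shift]
  abel

theorem homotopy_identity (M : ℕ) :
    (d (shiftOp S) (M+1)).comp (homotopy s0 (M+1)) + (homotopy s0 M).comp (d (shiftOp S) M)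
      + (mulMap M).comp (theta s0 M) = AddMonoidHom.id _ := by
  induction M with
  | zero =>
    refine CR.addHom_ext_of_shift (homotopy_identity_shift s0 0) fun u hu => ?_
    simp only [AddMonoidHom.add_apply, AddMonoidHom.comp_apply, AddMonoidHom.id_apply,
      mulMap_theta_mon_of_fst_eq_zero s0 u hu, d_zero, AddMonoidHom.zero_apply,
      homotopy_zero, homotopy_succ_mon, hu, intPartialSum_zero, map_zero, neg_zero, sub_zero,
      zero_add]
  | succ m ih =>
    refine CR.addHom_ext_of_shift (homotopy_identity_shift s0 (m+1)) fun u hu => ?_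
    obtain ⟨x, w, rfl⟩ : ∃ x w, u = Fin.cons x w :=
      ⟨u 0, Fin.tail u, (Fin.cons_self_tail u).symm⟩
    simp only [Fin.cons_zero] at hu
    have hw := DFunLike.congr_fun ih (mon w)
    simp only [AddMonoidHom.add_apply, AddMonoidHom.comp_apply, AddMonoidHom.id_apply] at hw ⊢
    set ν := mulₗ (m+1) (embedZero (q s0 x.2 : S →₀ ℤ))
    have hν : ν (d (shiftOp S) (m+1) (homotopy s0 (m+1) (mon w))) +
        ν (homotopy s0 m (d (shiftOp S) m (mon w))) + ν (mulMap m (theta s0 m (mon w))) +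
        consHom ((0 : ℤ), s0) (m+1) (mon w) = consHom x (m+1) (mon w) := by
      rw [← map_add, ← map_add, hw, mulₗ_embedZero_q,
        show ((0 : ℤ), x.2) = x from Prod.ext hu.symm rfl, sub_add_cancel]
    rw [← consHom_mon, homotopy_consHom s0 x hu, map_neg, d_mulₗ shiftOp_eq, aug_embedZero_q,
      zero_smul, zero_sub, neg_neg, d_consHom shiftOp_eq, map_sub, map_sub, homotopy_shift,
      homotopy_consHom s0 x hu, theta_consHom, mulMap_tensorCons, ← hν]
    abel

lemma sub_mulMap_theta_mem_BC {n : ℕ} (z : CR (ℤ × S) (n+1))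
    (hz : z ∈ ZC (shiftOp S) (n+1)) :
    z - mulMap n (theta s0 n z) ∈ BC (shiftOp S) (n+1) := by
  have hdz : d (shiftOp S) n z = 0 := hz
  have := DFunLike.congr_fun (homotopy_identity s0 n) z
  simp only [AddMonoidHom.add_apply, AddMonoidHom.comp_apply, AddMonoidHom.id_apply, hdz,
    map_zero, add_zero] at this
  exact ⟨homotopy s0 (n+1) z, eq_sub_of_add_eq this⟩

lemma exists_retraction_mulMap (n : ℕ) : ∃ θ : CR (ℤ × S) (n+1) →+ AugTensor S n,
    (∀ c, θ (d (shiftOp S) (n+1) c) = 0) ∧ (∀ g, θ (mulMap n g) = g) ∧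
      ∀ z ∈ ZC (shiftOp S) (n+1), z - mulMap n (θ z) ∈ BC (shiftOp S) (n+1) := by
  rcases isEmpty_or_nonempty S with hS | ⟨⟨s0⟩⟩
  · refine ⟨0, fun _ => rfl, fun _ => Subsingleton.elim _ _, fun z _ => ?_⟩
    rw [Subsingleton.elim (z - _) 0]
    exact zero_mem _
  · exact ⟨theta s0 n, theta_d s0, theta_mulMap s0, sub_mulMap_theta_mem_BC s0⟩

end FreePermutationRack

/-- The multiplication map `S̄^{⊗ n} ⊗ ℤS → HR_{n+1}(ℤ × S, +1)`,
`v₁ ⊗ ⋯ ⊗ v_n ⊗ s ↦ [v₁⋯v_n·s]`, is an isomorphism of abelian groups. -/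
theorem free_rack_homology_iso (S : Type) (n : ℕ) :
    ∃ e : (PiTensorProduct ℤ (fun _ : Fin n => ↥(Saug S)) ⊗[ℤ] (S →₀ ℤ)) ≃+
        HR (ℤ × S) (shiftOp S) (n+1),
      ∀ (v : Fin n → ↥(Saug S)) (s : S)
        (h : prodChain n (fun i => ((v i : S →₀ ℤ))) (Finsupp.single s 1) ∈
          ZC (shiftOp S) (n+1)),
        e (PiTensorProduct.tprod ℤ v ⊗ₜ[ℤ] Finsupp.single s 1) =
          QuotientAddGroup.mk (⟨_, h⟩ : ↥(ZC (shiftOp S) (n+1))) := by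
  obtain ⟨θ, hθd, hθp, hpθ⟩ := FreePermutationRack.exists_retraction_mulMap (S := S) n
  obtain ⟨e, he⟩ := exists_addEquiv_HR_of_retraction (op := shiftOp S) _ θ
    FreePermutationRack.d_mulMap hθd hθp hpθ
  refine ⟨e, fun v s h => ?_⟩
  rw [he]
  congr
  simp [FreePermutationRack.mulMultilinear_eq_prodChain]
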